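/- arXiv:1307.2113 — 4 statements merged into one kernel-verified Lean document; each statement's English description precedes it below -/
import Mathlib

section
/- Every 2×2 complex matrix A with Aᴴ A = I whose entries all lie in the Gaussian integers Z[i] is a finite product of the matrices U₁ = [(0,1),(1,0)] and U₂ = [(i,0),(0,1)] and their inverses. That is, the group U(2;Z[i]) is generated by U₁ and U₂. -/
open Matrix Complex

/-- A complex number is a Gaussian integer. -/
def IsGaussInt (z : ℂ) : Prop := ∃ a b : ℤ, z = (a : ℂ) + (b : ℂ) * Complex.I

noncomputable def Umat₁ : Matrix (Fin 2) (Fin 2) ℂ := !![0, 1; 1, 0]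

noncomputable def Umat₂ : Matrix (Fin 2) (Fin 2) ℂ := !![Complex.I, 0; 0, 1]

open ComplexConjugate

/-!
A column of a unitary matrix is a unit vector, and the squared modulus of a Gaussian integer is
a natural number, so each column of a unitary matrix over `ℤ[i]` has exactly one nonzero entry,
a unit `i ^ n` of `ℤ[i]`; orthogonality puts the two nonzero entries in different rows. Hence the
matrix is `diag(i ^ m, i ^ n)` or `diag(i ^ m, i ^ n) * U₁`, and
`diag(i ^ m, i ^ n) = U₂ ^ m * (U₁ U₂ U₁) ^ n`.
-/

lemma normSq_intCast_add_intCast_mul_I (a b : ℤ) :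
    normSq ((a : ℂ) + (b : ℂ) * I) = ((a ^ 2 + b ^ 2 : ℤ) : ℝ) := by
  rw [← ofReal_intCast, ← ofReal_intCast, normSq_add_mul_I]
  push_cast
  ring

namespace IsGaussInt

lemma eq_zero_of_normSq_lt_one {z : ℂ} (hz : IsGaussInt z) (h : normSq z < 1) : z = 0 := by
  obtain ⟨a, b, rfl⟩ := hz
  rw [normSq_intCast_add_intCast_mul_I] at h
  have hab : a ^ 2 + b ^ 2 = 0 := by
    have : a ^ 2 + b ^ 2 < 1 := by exact_mod_cast h
    nlinarith [sq_nonneg a, sq_nonneg b]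
  obtain ⟨ha, hb⟩ := (add_eq_zero_iff_of_nonneg (sq_nonneg a) (sq_nonneg b)).mp hab
  simp [pow_eq_zero_iff two_ne_zero |>.mp ha, pow_eq_zero_iff two_ne_zero |>.mp hb]

lemma exists_eq_I_pow_of_normSq_eq_one {z : ℂ} (hz : IsGaussInt z) (h : normSq z = 1) :
    ∃ n : ℕ, z = I ^ n := by
  obtain ⟨a, b, rfl⟩ := hz
  rw [normSq_intCast_add_intCast_mul_I] at h
  have hab : a ^ 2 + b ^ 2 = 1 := by exact_mod_cast h
  have ha : |a| ≤ 1 := sq_le_one_iff_abs_le_one a |>.mp (by nlinarith [sq_nonneg b])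
  have hb : |b| ≤ 1 := sq_le_one_iff_abs_le_one b |>.mp (by nlinarith [sq_nonneg a])
  rw [abs_le] at ha hb
  obtain ⟨ha₁, ha₂⟩ := ha
  obtain ⟨hb₁, hb₂⟩ := hb
  interval_cases a <;> interval_cases b <;> norm_num at hab
  · exact ⟨2, by simp [sq]⟩
  · exact ⟨3, by simp [pow_succ]⟩
  · exact ⟨1, by simp⟩
  · exact ⟨0, by simp⟩

lemma unitVector_cases {z w : ℂ} (hz : IsGaussInt z) (hw : IsGaussInt w)
    (h : normSq z + normSq w = 1) :
    (z = 0 ∧ ∃ n : ℕ, w = I ^ n) ∨ ((∃ n : ℕ, z = I ^ n) ∧ w = 0) := by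
  by_cases hz₁ : normSq z < 1
  · have hz₀ := hz.eq_zero_of_normSq_lt_one hz₁
    rw [hz₀, map_zero, zero_add] at h
    exact .inl ⟨hz₀, hw.exists_eq_I_pow_of_normSq_eq_one h⟩
  · have hw₀ : w = 0 := normSq_eq_zero.mp (by linarith [normSq_nonneg z, normSq_nonneg w])
    rw [hw₀, map_zero, add_zero] at h
    exact .inr ⟨hz.exists_eq_I_pow_of_normSq_eq_one h, hw₀⟩

end IsGaussInt

lemma sum_normSq_of_conjTranspose_mul_self_eq_one {n : Type*} [Fintype n] [DecidableEq n]
    {A : Matrix n n ℂ} (hA : Aᴴ * A = 1) (j : n) : ∑ i, normSq (A i j) = 1 := by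
  have h := congrFun (congrFun hA j) j
  simp only [mul_apply, conjTranspose_apply, one_apply_eq, star_def, ← normSq_eq_conj_mul_self]
    at h
  exact_mod_cast h

lemma exists_eq_diagonal_I_pow_or_mul_Umat₁ {A : Matrix (Fin 2) (Fin 2) ℂ} (hA : Aᴴ * A = 1)
    (hint : ∀ j k, IsGaussInt (A j k)) :
    ∃ m n : ℕ, A = diagonal ![I ^ m, I ^ n] ∨ A = diagonal ![I ^ m, I ^ n] * Umat₁ := by
  have hcol (j : Fin 2) := (hint 0 j).unitVector_cases (hint 1 j)
    (by simpa [Fin.sum_univ_two] using sum_normSq_of_conjTranspose_mul_self_eq_one hA j)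
  have horth : conj (A 0 0) * A 0 1 + conj (A 1 0) * A 1 1 = 0 := by
    simpa [mul_apply, Fin.sum_univ_two] using congrFun (congrFun hA 0) 1
  rcases hcol 0 with ⟨h00, n, h10⟩ | ⟨⟨m, h00⟩, h10⟩ <;>
    rcases hcol 1 with ⟨h01, m', h11⟩ | ⟨⟨n', h01⟩, h11⟩
  · simp [h00, h01, h10, h11] at horth
  · refine ⟨n', n, .inr ?_⟩
    ext i j
    fin_cases i <;> fin_cases j <;> simp [Umat₁, h00, h01, h10, h11]
  · refine ⟨m, m', .inl ?_⟩
    ext i j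
    fin_cases i <;> fin_cases j <;> simp [h00, h01, h10, h11]
  · simp [h00, h01, h10, h11] at horth

noncomputable def generatedByUmat : Submonoid (Matrix (Fin 2) (Fin 2) ℂ) :=
  (Subgroup.closure {g : GL (Fin 2) ℂ | (g : Matrix (Fin 2) (Fin 2) ℂ) = Umat₁ ∨
    (g : Matrix (Fin 2) (Fin 2) ℂ) = Umat₂}).toSubmonoid.map (Units.coeHom _)

lemma mem_generatedByUmat_of_isUnit {M : Matrix (Fin 2) (Fin 2) ℂ} (hM : IsUnit M)
    (h : M = Umat₁ ∨ M = Umat₂) : M ∈ generatedByUmat :=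
  ⟨hM.unit, Subgroup.subset_closure (by simpa only [Set.mem_ofPred_eq, hM.unit_spec]), hM.unit_spec⟩

lemma Umat₁_mem_generatedByUmat : Umat₁ ∈ generatedByUmat :=
  mem_generatedByUmat_of_isUnit ((isUnit_iff_isUnit_det _).mpr (by simp [Umat₁, det_fin_two]))
    (.inl rfl)

lemma Umat₂_mem_generatedByUmat : Umat₂ ∈ generatedByUmat :=
  mem_generatedByUmat_of_isUnit ((isUnit_iff_isUnit_det _).mpr (by simp [Umat₂, det_fin_two]))
    (.inr rfl)

lemma Umat₂_eq_diagonal : Umat₂ = diagonal ![I, 1] := by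
  ext i j
  fin_cases i <;> fin_cases j <;> simp [Umat₂]

lemma Umat₁_mul_diagonal_mul_Umat₁ (a b : ℂ) :
    Umat₁ * diagonal ![a, b] * Umat₁ = diagonal ![b, a] := by
  ext i j
  fin_cases i <;> fin_cases j <;> simp [Umat₁, mul_apply, Fin.sum_univ_two, vecMul, dotProduct]

lemma diagonal_I_pow_mem_generatedByUmat (m n : ℕ) :
    diagonal ![I ^ m, I ^ n] ∈ generatedByUmat := by
  have h : diagonal ![I ^ m, I ^ n] = Umat₂ ^ m * (Umat₁ * Umat₂ * Umat₁) ^ n := by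
    rw [Umat₂_eq_diagonal, Umat₁_mul_diagonal_mul_Umat₁, diagonal_pow, diagonal_pow,
      diagonal_mul_diagonal]
    congr 1
    ext i
    fin_cases i <;> simp
  rw [h]
  have hU₁ := Umat₁_mem_generatedByUmat
  have hU₂ := Umat₂_mem_generatedByUmat
  exact mul_mem (pow_mem hU₂ m) (pow_mem (mul_mem (mul_mem hU₁ hU₂) hU₁) n)

/-- The group `U(2; ℤ[i])` of 2×2 unitary matrices with Gaussian integer
entries is generated by `U₁ = [(0,1),(1,0)]` and `U₂ = [(i,0),(0,1)]`. -/
theorem unitary_gauss_int_generated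
    (A : Matrix (Fin 2) (Fin 2) ℂ)
    (hA : Aᴴ * A = 1)
    (hint : ∀ j k, IsGaussInt (A j k)) :
    ∃ g ∈ Subgroup.closure
      {g : GL (Fin 2) ℂ | (g : Matrix (Fin 2) (Fin 2) ℂ) = Umat₁ ∨
        (g : Matrix (Fin 2) (Fin 2) ℂ) = Umat₂},
      (g : Matrix (Fin 2) (Fin 2) ℂ) = A := by
  suffices A ∈ generatedByUmat from Submonoid.mem_map.mp this
  obtain ⟨m, n, rfl | rfl⟩ := exists_eq_diagonal_I_pow_or_mul_Umat₁ hA hint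
  · exact diagonal_I_pow_mem_generatedByUmat m n
  · exact mul_mem (diagonal_I_pow_mem_generatedByUmat m n) Umat₁_mem_generatedByUmat
end

section
/- Let r > 0 be a real number, t a real number, τ₁, τ₂ complex numbers, and U = (u_{jk}) a 2×2 complex matrix with Uᴴ U = I. Let P be the 4×4 matrix with rows (r, −(τ̄₁u₁₁+τ̄₂u₂₁), −(τ̄₁u₁₂+τ̄₂u₂₂), (−|τ₁|²−|τ₂|²+it)/(2r)), (0, u₁₁, u₁₂, τ₁/r), (0, u₂₁, u₂₂, τ₂/r), (0, 0, 0, 1/r). Then all sixteen entries of P lie in the Gaussian integers Z[i] if and only if r = 1, t is an even integer, τ₁ and τ₂ lie in Z[i] with |τ₁|² + |τ₂|² an even integer, and all four entries of U lie in Z[i]. -/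
open Matrix Complex

/-! The entries `r` and `1 / r` of `P` are mutually inverse positive real Gaussian integers,
which forces `r = 1`. Once `r = 1` the conditions are read off entrywise, the corner entry
`(-(|τ₁|² + |τ₂|²) + i t) / 2` carrying both parity conditions; conversely, the remaining
entries lie in `ℤ[i]` because `ℤ[i]` is a subring of `ℂ` stable under conjugation. -/

theorem isGaussInt_iff_mem_range {z : ℂ} :
    IsGaussInt z ↔ z ∈ GaussianInt.toComplex.range := by
  constructor
  · rintro ⟨a, b, rfl⟩
    exact ⟨⟨a, b⟩, GaussianInt.toComplex_def' a b⟩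
  · rintro ⟨x, rfl⟩
    exact ⟨x.re, x.im, GaussianInt.toComplex_def x⟩

theorem isGaussInt_iff_re_im {z : ℂ} :
    IsGaussInt z ↔ (∃ a : ℤ, z.re = a) ∧ ∃ b : ℤ, z.im = b := by
  constructor
  · rintro ⟨a, b, rfl⟩
    exact ⟨⟨a, by simp⟩, b, by simp⟩
  · rintro ⟨⟨a, ha⟩, b, hb⟩
    exact ⟨a, b, Complex.ext (by simp [ha]) (by simp [hb])⟩

namespace IsGaussInt

variable {z w : ℂ}

@[simp]
theorem zero : IsGaussInt 0 := isGaussInt_iff_mem_range.2 (zero_mem _)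

@[simp]
theorem one : IsGaussInt 1 := isGaussInt_iff_mem_range.2 (one_mem _)

theorem neg (hz : IsGaussInt z) : IsGaussInt (-z) :=
  isGaussInt_iff_mem_range.2 (neg_mem (isGaussInt_iff_mem_range.1 hz))

theorem add (hz : IsGaussInt z) (hw : IsGaussInt w) : IsGaussInt (z + w) :=
  isGaussInt_iff_mem_range.2 <|
    add_mem (isGaussInt_iff_mem_range.1 hz) (isGaussInt_iff_mem_range.1 hw)

theorem mul (hz : IsGaussInt z) (hw : IsGaussInt w) : IsGaussInt (z * w) :=
  isGaussInt_iff_mem_range.2 <|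
    mul_mem (isGaussInt_iff_mem_range.1 hz) (isGaussInt_iff_mem_range.1 hw)

theorem conj (hz : IsGaussInt z) : IsGaussInt (starRingEnd ℂ z) := by
  obtain ⟨x, rfl⟩ := isGaussInt_iff_mem_range.1 hz
  exact isGaussInt_iff_mem_range.2 ⟨star x, GaussianInt.toComplex_star x⟩

end IsGaussInt

theorem eq_one_of_isGaussInt_ofReal {r : ℝ} (hr : 0 < r) (h : IsGaussInt r)
    (h' : IsGaussInt (1 / r)) : r = 1 := by
  obtain ⟨⟨a, ha⟩, -⟩ := isGaussInt_iff_re_im.1 h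
  obtain ⟨⟨b, hb⟩, -⟩ := isGaussInt_iff_re_im.1 h'
  rw [← ofReal_one, ← ofReal_div, ofReal_re] at hb
  rw [ofReal_re] at ha
  have hab : (a : ℝ) * b = 1 := by
    rw [← ha, ← hb]
    field_simp
  have ha_pos : (0 : ℝ) < a := ha ▸ hr
  have ha_one : a = 1 :=
    Int.eq_one_of_mul_eq_one_right (Int.cast_pos.mp ha_pos).le (by exact_mod_cast hab)
  rw [ha, ha_one, Int.cast_one]

theorem isGaussInt_neg_add_I_mul_div_two_iff (s t : ℝ) :
    IsGaussInt ((-(s : ℂ) + I * t) / 2) ↔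
      (∃ m : ℤ, t = 2 * m) ∧ ∃ n : ℤ, s = 2 * n := by
  have hre : ((-(s : ℂ) + I * t) / 2).re = -s / 2 := by simp
  have him : ((-(s : ℂ) + I * t) / 2).im = t / 2 := by simp
  rw [isGaussInt_iff_re_im, hre, him, and_comm]
  refine and_congr (exists_congr fun m => ?_)
    ⟨fun ⟨n, hn⟩ => ⟨-n, ?_⟩, fun ⟨n, hn⟩ => ⟨-n, ?_⟩⟩
  · constructor <;> intro h <;> linarith
  · push_cast; linarith
  · push_cast; linarith

theorem langlands_integral_iff_general
    (r : ℝ) (hr : 0 < r) (t : ℝ) (τ₁ τ₂ : ℂ)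
    (U : Matrix (Fin 2) (Fin 2) ℂ) :
    (∀ j k, IsGaussInt
      ((!![(r : ℂ),
           -((starRingEnd ℂ) τ₁ * U 0 0 + (starRingEnd ℂ) τ₂ * U 1 0),
           -((starRingEnd ℂ) τ₁ * U 0 1 + (starRingEnd ℂ) τ₂ * U 1 1),
           (-(‖τ₁‖ : ℂ) ^ 2 - (‖τ₂‖ : ℂ) ^ 2 +
             Complex.I * (t : ℂ)) / (2 * (r : ℂ));
         0, U 0 0, U 0 1, τ₁ / (r : ℂ);
         0, U 1 0, U 1 1, τ₂ / (r : ℂ);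
         0, 0, 0, 1 / (r : ℂ)] : Matrix (Fin 4) (Fin 4) ℂ) j k)) ↔
    (r = 1 ∧ (∃ m : ℤ, t = 2 * m) ∧ IsGaussInt τ₁ ∧ IsGaussInt τ₂ ∧
      (∃ m : ℤ, ‖τ₁‖ ^ 2 + ‖τ₂‖ ^ 2 = 2 * m) ∧
      ∀ j k, IsGaussInt (U j k)) := by
  have entry03 :
      (-(‖τ₁‖ : ℂ) ^ 2 - (‖τ₂‖ : ℂ) ^ 2 + I * t) / (2 * ((1 : ℝ) : ℂ)) =
        (-((‖τ₁‖ ^ 2 + ‖τ₂‖ ^ 2 : ℝ) : ℂ) + I * t) / 2 := by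
    push_cast; ring
  simp only [Fin.forall_fin_succ, IsEmpty.forall_iff, and_true, Matrix.of_apply,
    Matrix.cons_val', Matrix.cons_val_zero, Matrix.cons_val_succ, Matrix.empty_val',
    Matrix.cons_val_fin_one, IsGaussInt.zero, true_and]
  constructor
  · rintro ⟨⟨h00, -, -, hP03⟩, ⟨hU00, hU01, hτ₁⟩, ⟨hU10, hU11, hτ₂⟩, h33⟩
    obtain rfl := eq_one_of_isGaussInt_ofReal hr h00 h33
    rw [entry03, isGaussInt_neg_add_I_mul_div_two_iff] at hP03
    rw [ofReal_one, div_one] at hτ₁ hτ₂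
    exact ⟨rfl, hP03.1, hτ₁, hτ₂, hP03.2, ⟨hU00, hU01⟩, hU10, hU11⟩
  · rintro ⟨rfl, ht, hτ₁, hτ₂, hs, ⟨hU00, hU01⟩, hU10, hU11⟩
    rw [entry03, isGaussInt_neg_add_I_mul_div_two_iff, ofReal_one, div_one, div_one]
    exact ⟨⟨IsGaussInt.one, (hτ₁.conj.mul hU00 |>.add (hτ₂.conj.mul hU10)).neg,
      (hτ₁.conj.mul hU01 |>.add (hτ₂.conj.mul hU11)).neg, ht, hs⟩,
      ⟨hU00, hU01, hτ₁⟩, ⟨hU10, hU11, hτ₂⟩, by simp⟩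

/-- An element `P = N_{(τ,t)} A_r M_U` of the stabilizer of infinity in `U(3,1)`
has all entries in `ℤ[i]` if and only if `r = 1`, `t` is an even integer,
`τ₁, τ₂ ∈ ℤ[i]` with `|τ₁|² + |τ₂|²` an even integer, and `U` has entries
in `ℤ[i]`. -/
theorem langlands_integral_iff
    (r : ℝ) (hr : 0 < r) (t : ℝ) (τ₁ τ₂ : ℂ)
    (U : Matrix (Fin 2) (Fin 2) ℂ) (hU : Uᴴ * U = 1) :
    (∀ j k, IsGaussInt
      ((!![(r : ℂ),
           -((starRingEnd ℂ) τ₁ * U 0 0 + (starRingEnd ℂ) τ₂ * U 1 0),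
           -((starRingEnd ℂ) τ₁ * U 0 1 + (starRingEnd ℂ) τ₂ * U 1 1),
           (-(‖τ₁‖ : ℂ) ^ 2 - (‖τ₂‖ : ℂ) ^ 2 +
             Complex.I * (t : ℂ)) / (2 * (r : ℂ));
         0, U 0 0, U 0 1, τ₁ / (r : ℂ);
         0, U 1 0, U 1 1, τ₂ / (r : ℂ);
         0, 0, 0, 1 / (r : ℂ)] : Matrix (Fin 4) (Fin 4) ℂ) j k)) ↔
    (r = 1 ∧ (∃ m : ℤ, t = 2 * m) ∧ IsGaussInt τ₁ ∧ IsGaussInt τ₂ ∧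
      (∃ m : ℤ, ‖τ₁‖ ^ 2 + ‖τ₂‖ ^ 2 = 2 * m) ∧
      ∀ j k, IsGaussInt (U j k)) :=
  langlands_integral_iff_general r hr t τ₁ τ₂ U
end

section
/- Let ξ₁, ξ₂ be complex numbers and t ∈ [−1,1] a real number. If ξ₂ ∈ S₂ and ξ₁ ∈ Δ (or symmetrically ξ₁ ∈ S₂ and ξ₂ ∈ Δ), then | |ξ₁|² + |ξ₂|² + it | < 2. Hence the regions Σ₂, Σ₄, Σ₅, Σ₆, Σ₈ (those parts of Σ where at least one of the two coordinates lies in the square S₂) are covered by the spinal sphere S₀ = { (ξ₁,ξ₂,t) : | |ξ₁|²+|ξ₂|²+it | = 2 } and its interior. -/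
open Complex

/-- The closed triangle with vertices `0, 1, i`. -/
def triΔ : Set ℂ := {z : ℂ | 0 ≤ z.re ∧ 0 ≤ z.im ∧ z.re + z.im ≤ 1}

/-- The closed square with vertices `0, 1/2, i/2, (1+i)/2`. -/
def sqS₂ : Set ℂ := {z : ℂ | 0 ≤ z.re ∧ z.re ≤ 1/2 ∧ 0 ≤ z.im ∧ z.im ≤ 1/2}

/-! The square `S₂` has squared radius `1/2` and the triangle `Δ` squared radius `1`, so
`|ξ₁|² + |ξ₂|² ≤ 3/2`; with `|t| ≤ 1` this gives `| |ξ₁|² + |ξ₂|² + it |² ≤ 9/4 + 1 < 4`. -/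

lemma sq_norm_le_one_of_mem_triΔ {z : ℂ} (hz : z ∈ triΔ) : ‖z‖ ^ 2 ≤ 1 := by
  obtain ⟨hre, him, hsum⟩ := hz
  rw [Complex.sq_norm, Complex.normSq_apply]
  nlinarith

lemma sq_norm_le_half_of_mem_sqS₂ {z : ℂ} (hz : z ∈ sqS₂) : ‖z‖ ^ 2 ≤ 1 / 2 := by
  obtain ⟨hre₀, hre₁, him₀, him₁⟩ := hz
  rw [Complex.sq_norm, Complex.normSq_apply]
  nlinarith

lemma sq_norm_add_sq_norm_le_of_mem_triΔ_of_mem_sqS₂ {z w : ℂ} (hz : z ∈ triΔ)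
    (hw : w ∈ sqS₂) : ‖z‖ ^ 2 + ‖w‖ ^ 2 ≤ 3 / 2 := by
  linarith [sq_norm_le_one_of_mem_triΔ hz, sq_norm_le_half_of_mem_sqS₂ hw]

lemma norm_ofReal_add_I_mul_lt {s t r : ℝ} (hr : 0 ≤ r) (h : s ^ 2 + t ^ 2 < r ^ 2) :
    ‖(s : ℂ) + I * t‖ < r := by
  rw [mul_comm, norm_add_mul_I]
  exact (Real.sqrt_lt_sqrt (by positivity) h).trans_eq (Real.sqrt_sq hr)

/-- If one of `ξ₁, ξ₂` lies in the square `S₂` and the other in the triangle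
`Δ`, and `−1 ≤ t ≤ 1`, then `| |ξ₁|² + |ξ₂|² + it | < 2`; hence the regions
`Σ₂, Σ₄, Σ₅, Σ₆, Σ₈` lie inside the spinal sphere `S₀`. -/
theorem sigma_square_inside_spinal_sphere
    (ξ₁ ξ₂ : ℂ) (t : ℝ) (ht : -1 ≤ t ∧ t ≤ 1)
    (h : (ξ₁ ∈ triΔ ∧ ξ₂ ∈ sqS₂) ∨ (ξ₁ ∈ sqS₂ ∧ ξ₂ ∈ triΔ)) :
    ‖((‖ξ₁‖ : ℂ) ^ 2 + (‖ξ₂‖ : ℂ) ^ 2 +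
      Complex.I * (t : ℂ))‖ < 2 := by
  have hs : ‖ξ₁‖ ^ 2 + ‖ξ₂‖ ^ 2 ≤ 3 / 2 := by
    rcases h with ⟨h₁, h₂⟩ | ⟨h₁, h₂⟩
    · exact sq_norm_add_sq_norm_le_of_mem_triΔ_of_mem_sqS₂ h₁ h₂
    · linarith [sq_norm_add_sq_norm_le_of_mem_triΔ_of_mem_sqS₂ h₂ h₁]
  have hs₀ : 0 ≤ ‖ξ₁‖ ^ 2 + ‖ξ₂‖ ^ 2 := by positivity
  have ht₂ : t ^ 2 ≤ 1 := by nlinarith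
  have key := norm_ofReal_add_I_mul_lt (s := ‖ξ₁‖ ^ 2 + ‖ξ₂‖ ^ 2) (t := t) zero_le_two
    (by nlinarith)
  push_cast at key
  exact key
end

section
/- Let ξ₁, ξ₂ ∈ S₃ be complex numbers in the closed triangle with vertices 0, 1, (1+i)/2, and let t ∈ [−1,1] be real. Then either | |ξ₁|² + |ξ₂|² + it | ≤ 2, or there exists k ∈ {0, −1} such that | |ξ₁−1|² + |ξ₂−1|² + i(t + 2k + 2·Im(ξ₁+ξ₂)) | ≤ 2. Hence the region Σ₉ is covered by the closed regions bounded by the spinal sphere S₀, the Heisenberg sphere S₁ of radius √2 centered at ((1,1)ᵀ,0), and its vertical translate T⁻¹(S₁). -/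
open Complex

/-!
The triangle `S₃` lies in the disc with diameter `[0, 1]`, so `A + B ≤ 2` for
`A = |ξ₁|² + |ξ₂|²` and `B = |ξ₁ - 1|² + |ξ₂ - 1|²`. If `A ≤ 1` the point lies inside `S₀`.
Otherwise `B < 1`, and since `Im ξ ≤ 1/2` on `S₃` the height `t + 2 Im(ξ₁ + ξ₂)` lies in
`[-1, 3]`; one of `T⁰`, `T⁻¹` moves it into `[-1, 1]`, which puts the point inside the
corresponding translate of `S₁`.
-/

/-- The closed triangle with vertices `0, 1, (1+i)/2`. -/
def triS₃ : Set ℂ := {z : ℂ | 0 ≤ z.im ∧ z.im ≤ z.re ∧ z.re + z.im ≤ 1}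

lemma norm_ofReal_add_I_mul_le_iff {a b r : ℝ} (hr : 0 ≤ r) :
    ‖(a : ℂ) + I * b‖ ≤ r ↔ a ^ 2 + b ^ 2 ≤ r ^ 2 := by
  rw [← abs_norm, ← sq_le_sq₀ (abs_nonneg _) hr, sq_abs, Complex.sq_norm, mul_comm,
    normSq_add_mul_I]

lemma im_le_half_of_mem_triS₃ {z : ℂ} (hz : z ∈ triS₃) : z.im ≤ 1 / 2 := by
  obtain ⟨-, him, hsum⟩ := hz
  linarith

lemma norm_sq_add_norm_sub_one_sq_le_one {z : ℂ} (hz : z ∈ triS₃) :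
    ‖z‖ ^ 2 + ‖z - 1‖ ^ 2 ≤ 1 := by
  obtain ⟨h0, him, hsum⟩ := hz
  have hy : z.im ^ 2 ≤ z.re * (1 - z.re) :=
    pow_two z.im ▸ mul_le_mul him (by linarith) h0 (by linarith)
  simp only [Complex.sq_norm, normSq_apply, sub_re, sub_im, one_re, one_im]
  nlinarith

lemma exists_shift_abs_le_one {s : ℝ} (h₁ : -1 ≤ s) (h₃ : s ≤ 3) :
    ∃ k : ℤ, (k = 0 ∨ k = -1) ∧ |s + 2 * k| ≤ 1 := by
  rcases le_or_gt s 1 with hs | hs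
  · exact ⟨0, Or.inl rfl, abs_le.2 ⟨by simpa using h₁, by simpa using hs⟩⟩
  · exact ⟨-1, Or.inr rfl, abs_le.2 ⟨by push_cast; linarith, by push_cast; linarith⟩⟩

/-- The region `Σ₉` is covered by the closed regions bounded by the spinal
sphere `S₀`, the Heisenberg sphere `S₁` of radius `√2` centered at
`((1,1)ᵀ,0)`, and its vertical translate `T⁻¹(S₁)`. -/
theorem sigma_nine_covered
    (ξ₁ ξ₂ : ℂ) (hξ₁ : ξ₁ ∈ triS₃) (hξ₂ : ξ₂ ∈ triS₃)
    (t : ℝ) (ht : -1 ≤ t ∧ t ≤ 1) :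
    ‖(‖ξ₁‖ : ℂ) ^ 2 + (‖ξ₂‖ : ℂ) ^ 2 +
      Complex.I * (t : ℂ)‖ ≤ 2 ∨
    ∃ k : ℤ, (k = 0 ∨ k = -1) ∧
      ‖(‖ξ₁ - 1‖ : ℂ) ^ 2 + (‖ξ₂ - 1‖ : ℂ) ^ 2 +
        Complex.I * ((t + 2 * k + 2 * (ξ₁ + ξ₂).im : ℝ) : ℂ)‖ ≤ 2 := by
  simp only [← ofReal_pow, ← ofReal_add, norm_ofReal_add_I_mul_le_iff zero_le_two]
  have hsum := add_le_add (norm_sq_add_norm_sub_one_sq_le_one hξ₁)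
    (norm_sq_add_norm_sub_one_sq_le_one hξ₂)
  have ht2 : t ^ 2 ≤ 1 := sq_le_one_iff_abs_le_one t |>.2 (abs_le.2 ht)
  rcases le_or_gt (‖ξ₁‖ ^ 2 + ‖ξ₂‖ ^ 2) 1 with hA | hA
  · left
    nlinarith [norm_nonneg ξ₁, norm_nonneg ξ₂]
  · right
    have hB : ‖ξ₁ - 1‖ ^ 2 + ‖ξ₂ - 1‖ ^ 2 < 1 := by linarith
    obtain ⟨k, hk, hs⟩ := exists_shift_abs_le_one (s := t + 2 * (ξ₁ + ξ₂).im)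
      (by linarith [hξ₁.1, hξ₂.1, add_im ξ₁ ξ₂])
      (by linarith [im_le_half_of_mem_triS₃ hξ₁, im_le_half_of_mem_triS₃ hξ₂, add_im ξ₁ ξ₂])
    refine ⟨k, hk, ?_⟩
    have hs2 := sq_le_one_iff_abs_le_one _ |>.2 hs
    nlinarith [norm_nonneg (ξ₁ - 1), norm_nonneg (ξ₂ - 1)]
end
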